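/- Fix n ≥ p ≥ 1. There exists a constant C > 0 such that for every X ∈ St(n,p) and every real n×p matrix E with ‖E‖₂ ≤ 1/2, the matrix X + E has full column rank (so its polar projection P(X+E) is defined) and ‖P(X+E) − (X + E − (1/2)XXᵀE − (1/2)XEᵀX)‖_F ≤ C·‖E‖_F². -/

import Mathlib

/-!
Write `Z = X + E` and `R = (ZᵀZ)^{1/2}`, so that `P(Z) = Z R⁻¹`. As `X` is an isometry and
`‖E‖₂ ≤ 1/2`, we have `‖Zx‖ ≥ ‖x‖/2`, and `‖Rx‖ = ‖Zx‖` because `RᵀR = ZᵀZ`; hence `R` is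
invertible with `‖R⁻¹‖₂ ≤ 2`, and `‖(R + 1)⁻¹‖₂ ≤ 1` since `R` is positive semidefinite.
With `S = ZᵀZ - 1 = XᵀE + EᵀX + EᵀE = R² - 1` the error is
`Z (R⁻¹ - 1 + S/2) - ES/2 - XEᵀE/2`, and `R⁻¹ - 1 + S/2 = (1/2 + R⁻¹)(R - 1)²` with
`R - 1 = (R + 1)⁻¹ S`. Each term is thus quadratic in `E`, and `‖AB‖_F ≤ ‖A‖₂ ‖B‖_F` bounds it
by a multiple of `‖E‖_F²` that does not depend on the dimensions.
-/

open Matrix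

noncomputable def specNorm {m n : Type*} [Fintype m] [Fintype n] [DecidableEq n]
    (A : Matrix m n ℝ) : ℝ :=
  ‖LinearMap.toContinuousLinearMap (Matrix.toEuclideanLin A)‖

noncomputable def frobNorm {m n : Type*} [Fintype m] [Fintype n] (A : Matrix m n ℝ) : ℝ :=
  Real.sqrt (∑ i, ∑ j, (A i j) ^ 2)

section
open scoped ComplexOrder

noncomputable def Matrix.PosSemidef.sqrt {n 𝕜 : Type*} [Fintype n] [DecidableEq n] [RCLike 𝕜]
    {A : Matrix n n 𝕜} (hA : A.PosSemidef) : Matrix n n 𝕜 :=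
  hA.1.eigenvectorUnitary.1 * diagonal ((↑) ∘ (√·) ∘ hA.1.eigenvalues) *
  (star hA.1.eigenvectorUnitary : Matrix n n 𝕜)

end

/-- Polar projection `P(Z) = Z (ZᵀZ)^{-1/2}` onto the Stiefel manifold. -/
noncomputable def polarProj {n p : ℕ} (Z : Matrix (Fin n) (Fin p) ℝ) : Matrix (Fin n) (Fin p) ℝ :=
  Z * (Matrix.PosSemidef.sqrt (Matrix.posSemidef_conjTranspose_mul_self Z))⁻¹

section Frobenius

variable {l m n : Type*} [Fintype l] [Fintype m] [Fintype n]

attribute [local instance] Matrix.frobeniusNormedAddCommGroup Matrix.frobeniusNormedSpace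

lemma frobNorm_eq_norm (A : Matrix m n ℝ) : frobNorm A = ‖A‖ := by
  simp [frobNorm, frobenius_norm_def, Real.sqrt_eq_rpow]

lemma frobNorm_nonneg (A : Matrix m n ℝ) : 0 ≤ frobNorm A := Real.sqrt_nonneg _

lemma frobNorm_add_le (A B : Matrix m n ℝ) : frobNorm (A + B) ≤ frobNorm A + frobNorm B := by
  simpa only [frobNorm_eq_norm] using norm_add_le A B

lemma frobNorm_sub_le (A B : Matrix m n ℝ) : frobNorm (A - B) ≤ frobNorm A + frobNorm B := by
  simpa only [frobNorm_eq_norm] using norm_sub_le A B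

lemma frobNorm_smul (c : ℝ) (A : Matrix m n ℝ) : frobNorm (c • A) = |c| * frobNorm A := by
  simp only [frobNorm_eq_norm, norm_smul, Real.norm_eq_abs]

lemma frobNorm_mul_le (A : Matrix l m ℝ) (B : Matrix m n ℝ) :
    frobNorm (A * B) ≤ frobNorm A * frobNorm B := by
  simpa only [frobNorm_eq_norm] using frobenius_norm_mul A B

lemma frobNorm_transpose (A : Matrix m n ℝ) : frobNorm Aᵀ = frobNorm A := by
  simp only [frobNorm_eq_norm, frobenius_norm_transpose]

end Frobenius

section Euclidean

variable {𝕜 : Type*} [RCLike 𝕜] {l m n : Type*} [Fintype l] [Fintype m] [Fintype n]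
  [DecidableEq n]

lemma Matrix.norm_toEuclideanLin_sq [DecidableEq m] (A : Matrix m n 𝕜)
    (x : EuclideanSpace 𝕜 n) :
    ‖toEuclideanLin A x‖ ^ 2 = RCLike.re (inner 𝕜 x (toEuclideanLin (Aᴴ * A) x)) := by
  rw [toLpLin_mul_same, LinearMap.comp_apply, toEuclideanLin_conjTranspose_eq_adjoint,
    LinearMap.adjoint_inner_right, inner_self_eq_norm_sq]

lemma Matrix.norm_toEuclideanLin_eq_of_conjTranspose_mul_self_eq [DecidableEq l]
    [DecidableEq m] {A : Matrix m n 𝕜} {B : Matrix l n 𝕜} (h : Aᴴ * A = Bᴴ * B)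
    (x : EuclideanSpace 𝕜 n) :
    ‖toEuclideanLin A x‖ = ‖toEuclideanLin B x‖ := by
  rw [← sq_eq_sq₀ (norm_nonneg _) (norm_nonneg _), norm_toEuclideanLin_sq,
    norm_toEuclideanLin_sq, h]

lemma Matrix.norm_toEuclideanLin_of_conjTranspose_mul_self_eq_one [DecidableEq m]
    {X : Matrix m n 𝕜} (hX : Xᴴ * X = 1) (x : EuclideanSpace 𝕜 n) :
    ‖toEuclideanLin X x‖ = ‖x‖ := by
  have h := norm_toEuclideanLin_eq_of_conjTranspose_mul_self_eq (B := (1 : Matrix n n 𝕜))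
    (by rw [hX, conjTranspose_one, one_mul]) x
  rwa [toLpLin_one, LinearMap.id_apply] at h

lemma Matrix.isUnit_of_forall_mul_norm_le {A : Matrix n n 𝕜} {c : ℝ} (hc : 0 < c)
    (h : ∀ x, c * ‖x‖ ≤ ‖toEuclideanLin A x‖) : IsUnit A := by
  refine mulVec_injective_iff_isUnit.mp fun x y hxy => ?_
  have hle := h (WithLp.toLp 2 (x - y))
  rw [toLpLin_toLp, toLin'_apply, mulVec_sub, hxy, sub_self, WithLp.toLp_zero, norm_zero] at hle
  have : WithLp.toLp 2 (x - y) = 0 := norm_eq_zero.mp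
    (le_antisymm (nonpos_of_mul_nonpos_right hle hc) (norm_nonneg _))
  simpa [sub_eq_zero] using this

end Euclidean

section L2

open scoped Matrix.Norms.L2Operator

variable {𝕜 : Type*} [RCLike 𝕜] {l m n : Type*} [Fintype l] [Fintype m] [Fintype n]
  [DecidableEq n]

lemma specNorm_eq_l2_opNorm (A : Matrix m n ℝ) : specNorm A = ‖A‖ := rfl

lemma Matrix.norm_toEuclideanLin_le (A : Matrix m n 𝕜)
    (x : EuclideanSpace 𝕜 n) : ‖toEuclideanLin A x‖ ≤ ‖A‖ * ‖x‖ :=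
  (LinearMap.toContinuousLinearMap (toEuclideanLin A)).le_opNorm x

lemma frobNorm_sq_eq_sum_norm_toEuclideanLin_single (A : Matrix m n ℝ) :
    frobNorm A ^ 2 = ∑ j, ‖toEuclideanLin A (EuclideanSpace.single j 1)‖ ^ 2 := by
  rw [frobNorm, Real.sq_sqrt (by positivity), Finset.sum_comm]
  simp [EuclideanSpace.norm_sq_eq, toLpLin_apply, mulVec_single]

lemma frobNorm_mul_le_l2_opNorm_mul [DecidableEq m] (A : Matrix l m ℝ) (B : Matrix m n ℝ) :
    frobNorm (A * B) ≤ ‖A‖ * frobNorm B := by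
  rw [← pow_le_pow_iff_left₀ (frobNorm_nonneg _)
    (mul_nonneg (norm_nonneg _) (frobNorm_nonneg _)) two_ne_zero, mul_pow,
    frobNorm_sq_eq_sum_norm_toEuclideanLin_single, frobNorm_sq_eq_sum_norm_toEuclideanLin_single,
    Finset.mul_sum]
  refine Finset.sum_le_sum fun j _ => ?_
  rw [toLpLin_mul_same, LinearMap.comp_apply, ← mul_pow]
  exact pow_le_pow_left₀ (norm_nonneg _) (norm_toEuclideanLin_le _ _) 2

lemma frobNorm_mul_le_mul_l2_opNorm [DecidableEq l] [DecidableEq m] (A : Matrix l m ℝ)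
    (B : Matrix m n ℝ) :
    frobNorm (A * B) ≤ frobNorm A * ‖B‖ := by
  have h := frobNorm_mul_le_l2_opNorm_mul Bᵀ Aᵀ
  rwa [← transpose_mul, frobNorm_transpose, frobNorm_transpose,
    ← conjTranspose_eq_transpose_of_trivial, l2_opNorm_conjTranspose, mul_comm] at h

lemma Matrix.l2_opNorm_inv_le_of_forall_mul_norm_le {A : Matrix n n 𝕜} {c : ℝ} (hc : 0 < c)
    (h : ∀ x, c * ‖x‖ ≤ ‖toEuclideanLin A x‖) : ‖A⁻¹‖ ≤ c⁻¹ := by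
  have hA : A * A⁻¹ = 1 :=
    mul_nonsing_inv A <| (isUnit_iff_isUnit_det A).mp (isUnit_of_forall_mul_norm_le hc h)
  refine ContinuousLinearMap.opNorm_le_bound _ (inv_nonneg.mpr hc.le) fun y => ?_
  have hy := h (toEuclideanLin A⁻¹ y)
  rw [← LinearMap.comp_apply, ← toLpLin_mul_same, hA, toLpLin_one, LinearMap.id_apply] at hy
  rw [inv_mul_eq_div, le_div_iff₀ hc, mul_comm]
  exact hy

lemma Matrix.l2_opNorm_le_one_of_conjTranspose_mul_self_eq_one [DecidableEq m]
    {X : Matrix m n 𝕜} (hX : Xᴴ * X = 1) : ‖X‖ ≤ 1 :=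
  ContinuousLinearMap.opNorm_le_bound _ zero_le_one fun x => by
    simp [norm_toEuclideanLin_of_conjTranspose_mul_self_eq_one hX]

lemma Matrix.mul_norm_le_norm_toEuclideanLin_add [DecidableEq m] {X E : Matrix m n 𝕜} {δ : ℝ}
    (hX : Xᴴ * X = 1) (hE : ‖E‖ ≤ δ) (x : EuclideanSpace 𝕜 n) :
    (1 - δ) * ‖x‖ ≤ ‖toEuclideanLin (X + E) x‖ := by
  have hEx : ‖toEuclideanLin E x‖ ≤ δ * ‖x‖ :=
    (norm_toEuclideanLin_le E x).trans (mul_le_mul_of_nonneg_right hE (norm_nonneg x))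
  have hXE := norm_sub_le_norm_add (toEuclideanLin X x) (toEuclideanLin E x)
  rw [norm_toEuclideanLin_of_conjTranspose_mul_self_eq_one hX] at hXE
  rw [map_add, LinearMap.add_apply]
  linarith

end L2

section PolarFactor

open scoped ComplexOrder MatrixOrder

variable {𝕜 : Type*} [RCLike 𝕜] {m n : Type*} [Fintype m] [Fintype n] [DecidableEq n]

lemma Matrix.PosSemidef.sqrt_eq_cfcSqrt {A : Matrix n n 𝕜} (hA : A.PosSemidef) :
    hA.sqrt = CFC.sqrt A := by
  rw [CFC.sqrt_eq_cfc, cfc_nnreal_eq_real _ A, hA.1.cfc_eq, IsHermitian.cfc,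
    Unitary.conjStarAlgAut_apply, PosSemidef.sqrt]
  congr 3
  ext i
  simp [hA.eigenvalues_nonneg i]

lemma polarProj_eq_mul_inv_cfcSqrt {n p : ℕ} (Z : Matrix (Fin n) (Fin p) ℝ) :
    polarProj Z = Z * (CFC.sqrt (Zᴴ * Z))⁻¹ := by
  rw [polarProj, PosSemidef.sqrt_eq_cfcSqrt]

lemma Matrix.PosSemidef.norm_le_norm_toEuclideanLin_add_one {A : Matrix n n 𝕜}
    (hA : A.PosSemidef) (x : EuclideanSpace 𝕜 n) : ‖x‖ ≤ ‖toEuclideanLin (A + 1) x‖ := by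
  have hAx : 0 ≤ RCLike.re (inner 𝕜 x (toEuclideanLin A x)) := by
    simpa [EuclideanSpace.inner_eq_star_dotProduct, toLpLin_apply, dotProduct_comm] using
      hA.re_dotProduct_nonneg (WithLp.ofLp x)
  have key : ‖x‖ ^ 2 ≤ ‖x‖ * ‖toEuclideanLin (A + 1) x‖ :=
    calc ‖x‖ ^ 2 ≤ RCLike.re (inner 𝕜 x (toEuclideanLin A x)) + ‖x‖ ^ 2 := by linarith
      _ = RCLike.re (inner 𝕜 x (toEuclideanLin (A + 1) x)) := by simp [inner_add_right]
      _ ≤ ‖x‖ * ‖toEuclideanLin (A + 1) x‖ := re_inner_le_norm _ _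
  nlinarith [norm_nonneg x, norm_nonneg (toEuclideanLin (A + 1) x)]

lemma Matrix.norm_toEuclideanLin_cfcSqrt_conjTranspose_mul_self [DecidableEq m]
    (Z : Matrix m n 𝕜) (x : EuclideanSpace 𝕜 n) :
    ‖toEuclideanLin (CFC.sqrt (Zᴴ * Z)) x‖ = ‖toEuclideanLin Z x‖ := by
  refine norm_toEuclideanLin_eq_of_conjTranspose_mul_self_eq ?_ x
  rw [(CFC.sqrt_nonneg (Zᴴ * Z)).posSemidef.isHermitian.eq,
    CFC.sqrt_mul_sqrt_self _ (posSemidef_conjTranspose_mul_self Z).nonneg]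

lemma Matrix.rank_eq_card_of_isUnit_conjTranspose_mul_self {Z : Matrix m n 𝕜}
    (h : IsUnit (Zᴴ * Z)) : Z.rank = Fintype.card n := by
  rw [← rank_conjTranspose_mul_self, rank_of_isUnit _ h]

end PolarFactor

noncomputable def polarExpansion {m n : Type*} [Fintype m] [Fintype n] (X E : Matrix m n ℝ) :
    Matrix m n ℝ :=
  X + E - (1 / 2 : ℝ) • (X * Xᵀ * E) - (1 / 2 : ℝ) • (X * Eᵀ * X)

lemma Matrix.transpose_mul_self_add_sub_one {m n : Type*} [Fintype m] [DecidableEq n]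
    {X : Matrix m n ℝ} (hX : Xᵀ * X = 1) (E : Matrix m n ℝ) :
    (X + E)ᵀ * (X + E) - 1 = Xᵀ * E + Eᵀ * X + Eᵀ * E := by
  rw [transpose_add, Matrix.add_mul, Matrix.mul_add, Matrix.mul_add, hX]
  abel

section Expansion

variable {m n : Type*} [Fintype m] [Fintype n] [DecidableEq n]

lemma Matrix.inv_sub_one_add_half_smul_mul_self_sub_one {R : Matrix n n ℝ} (hR : IsUnit R) :
    R⁻¹ - 1 + (1 / 2 : ℝ) • (R * R - 1)
      = (1 / 2 : ℝ) • ((R - 1) * (R - 1)) + R⁻¹ * ((R - 1) * (R - 1)) := by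
  have h : R⁻¹ * R = 1 := nonsing_inv_mul R ((isUnit_iff_isUnit_det R).mp hR)
  have h' : R⁻¹ * ((R - 1) * (R - 1)) = R - 1 - 1 + R⁻¹ := by
    simp only [mul_sub, sub_mul, ← mul_assoc, h, one_mul, mul_one]
    abel
  rw [h']
  simp only [mul_sub, sub_mul, one_mul, mul_one]
  module

lemma Matrix.sub_one_eq_inv_add_one_mul {R : Matrix n n ℝ} (hR : IsUnit (R + 1)) :
    R - 1 = (R + 1)⁻¹ * (R * R - 1) := by
  have h : (R + 1)⁻¹ * (R + 1) = 1 := nonsing_inv_mul _ ((isUnit_iff_isUnit_det _).mp hR)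
  rw [show R * R - 1 = (R + 1) * (R - 1) by noncomm_ring, ← mul_assoc, h, one_mul]

lemma mul_inv_sub_polarExpansion_eq {X : Matrix m n ℝ} (hX : Xᵀ * X = 1) (E : Matrix m n ℝ)
    (R : Matrix n n ℝ) :
    (X + E) * R⁻¹ - polarExpansion X E
      = (X + E) * (R⁻¹ - 1 + (1 / 2 : ℝ) • ((X + E)ᵀ * (X + E) - 1))
        - (1 / 2 : ℝ) • (E * ((X + E)ᵀ * (X + E) - 1)) - (1 / 2 : ℝ) • (X * (Eᵀ * E)) := by
  rw [transpose_mul_self_add_sub_one hX]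
  simp only [polarExpansion, Matrix.add_mul, Matrix.mul_add, Matrix.mul_sub, Matrix.mul_smul,
    Matrix.mul_one, Matrix.mul_assoc]
  module

end Expansion

section Estimate

open scoped Matrix.Norms.L2Operator

variable {m n : Type*} [Fintype m] [Fintype n] [DecidableEq m] [DecidableEq n]

lemma frobNorm_transpose_mul_self_sub_one_le {X E : Matrix m n ℝ} (hX : Xᵀ * X = 1)
    (hE : ‖E‖ ≤ 1 / 2) : frobNorm ((X + E)ᵀ * (X + E) - 1) ≤ 5 / 2 * frobNorm E := by
  have hXn : ‖X‖ ≤ 1 := l2_opNorm_le_one_of_conjTranspose_mul_self_eq_one <| by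
    rwa [conjTranspose_eq_transpose_of_trivial]
  have hXt : ‖Xᵀ‖ ≤ 1 := by rwa [← conjTranspose_eq_transpose_of_trivial, l2_opNorm_conjTranspose]
  have hEt : ‖Eᵀ‖ ≤ 1 / 2 := by
    rwa [← conjTranspose_eq_transpose_of_trivial, l2_opNorm_conjTranspose]
  have e0 := frobNorm_nonneg E
  have h1 : frobNorm (Xᵀ * E) ≤ frobNorm E :=
    (frobNorm_mul_le_l2_opNorm_mul _ _).trans (by nlinarith)
  have h2 : frobNorm (Eᵀ * X) ≤ frobNorm E :=
    (frobNorm_mul_le_mul_l2_opNorm _ _).trans (by rw [frobNorm_transpose]; nlinarith)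
  have h3 : frobNorm (Eᵀ * E) ≤ 1 / 2 * frobNorm E :=
    (frobNorm_mul_le_l2_opNorm_mul _ _).trans (by nlinarith)
  rw [transpose_mul_self_add_sub_one hX]
  linarith [frobNorm_add_le (Xᵀ * E + Eᵀ * X) (Eᵀ * E), frobNorm_add_le (Xᵀ * E) (Eᵀ * X)]

lemma frobNorm_inv_sub_one_add_half_smul_mul_self_sub_one_le {R : Matrix n n ℝ} (hR : IsUnit R)
    (hRinv : ‖R⁻¹‖ ≤ 2) :
    frobNorm (R⁻¹ - 1 + (1 / 2 : ℝ) • (R * R - 1)) ≤ 5 / 2 * frobNorm (R - 1) ^ 2 := by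
  have hsq := frobNorm_mul_le (R - 1) (R - 1)
  have hinv := frobNorm_mul_le_l2_opNorm_mul R⁻¹ ((R - 1) * (R - 1))
  have h0 := frobNorm_nonneg ((R - 1) * (R - 1))
  rw [inv_sub_one_add_half_smul_mul_self_sub_one hR]
  refine (frobNorm_add_le _ _).trans ?_
  rw [frobNorm_smul, abs_of_pos one_half_pos]
  nlinarith

lemma frobNorm_mul_inv_sub_polarExpansion_le {X E : Matrix m n ℝ} {R : Matrix n n ℝ}
    (hX : Xᵀ * X = 1) (hE : ‖E‖ ≤ 1 / 2) (hR : R * R = (X + E)ᵀ * (X + E)) (hRu : IsUnit R)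
    (hRinv : ‖R⁻¹‖ ≤ 2) (hR1u : IsUnit (R + 1)) (hR1inv : ‖(R + 1)⁻¹‖ ≤ 1) :
    frobNorm ((X + E) * R⁻¹ - polarExpansion X E) ≤ 26 * frobNorm E ^ 2 := by
  set e := frobNorm E
  set S := (X + E)ᵀ * (X + E) - 1
  have he := frobNorm_nonneg E
  have hXn : ‖X‖ ≤ 1 := l2_opNorm_le_one_of_conjTranspose_mul_self_eq_one <| by
    rwa [conjTranspose_eq_transpose_of_trivial]
  have hS : frobNorm S ≤ 5 / 2 * e := frobNorm_transpose_mul_self_sub_one_le hX hE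
  have hG : frobNorm (R - 1) ≤ 5 / 2 * e := by
    rw [sub_one_eq_inv_add_one_mul hR1u, hR]
    exact (frobNorm_mul_le_l2_opNorm_mul _ _).trans (by nlinarith [frobNorm_nonneg S])
  have hM : frobNorm (R⁻¹ - 1 + (1 / 2 : ℝ) • S) ≤ 125 / 8 * e ^ 2 := by
    have h := frobNorm_inv_sub_one_add_half_smul_mul_self_sub_one_le hRu hRinv
    rw [hR] at h
    nlinarith [frobNorm_nonneg (R - 1)]
  have h1 : frobNorm ((X + E) * (R⁻¹ - 1 + (1 / 2 : ℝ) • S)) ≤ 3 / 2 * (125 / 8 * e ^ 2) := by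
    refine (frobNorm_mul_le_l2_opNorm_mul _ _).trans (mul_le_mul ?_ hM (frobNorm_nonneg _) ?_)
    · linarith [norm_add_le X E]
    · norm_num
  have h2 : frobNorm ((1 / 2 : ℝ) • (E * S)) ≤ 1 / 2 * (e * (5 / 2 * e)) := by
    rw [frobNorm_smul, abs_of_pos one_half_pos]
    gcongr
    exact (frobNorm_mul_le _ _).trans (mul_le_mul_of_nonneg_left hS he)
  have h3 : frobNorm ((1 / 2 : ℝ) • (X * (Eᵀ * E))) ≤ 1 / 2 * (1 * (e * e)) := by
    rw [frobNorm_smul, abs_of_pos one_half_pos]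
    gcongr
    refine (frobNorm_mul_le_l2_opNorm_mul _ _).trans
      (mul_le_mul hXn ?_ (frobNorm_nonneg _) zero_le_one)
    simpa only [frobNorm_transpose] using frobNorm_mul_le Eᵀ E
  rw [mul_inv_sub_polarExpansion_eq hX]
  nlinarith [frobNorm_sub_le ((X + E) * (R⁻¹ - 1 + (1 / 2 : ℝ) • S) - (1 / 2 : ℝ) • (E * S))
    ((1 / 2 : ℝ) • (X * (Eᵀ * E))), frobNorm_sub_le ((X + E) * (R⁻¹ - 1 + (1 / 2 : ℝ) • S))
    ((1 / 2 : ℝ) • (E * S))]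

end Estimate

theorem stmt3 (n p : ℕ) :
    ∃ C : ℝ, 0 < C ∧
      ∀ X : Matrix (Fin n) (Fin p) ℝ, Xᵀ * X = 1 →
        ∀ E : Matrix (Fin n) (Fin p) ℝ, specNorm E ≤ 1 / 2 →
          (X + E).rank = p ∧
          frobNorm (polarProj (X + E) -
              (X + E - (1 / 2 : ℝ) • (X * Xᵀ * E) - (1 / 2 : ℝ) • (X * Eᵀ * X)))
            ≤ C * frobNorm E ^ 2 := by
  open scoped MatrixOrder in
  refine ⟨26, by norm_num, fun X hX E hE => ?_⟩
  rw [specNorm_eq_l2_opNorm] at hE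
  have hXh : Xᴴ * X = 1 := by rwa [conjTranspose_eq_transpose_of_trivial]
  set R := CFC.sqrt ((X + E)ᴴ * (X + E))
  have hRR : R * R = (X + E)ᴴ * (X + E) :=
    CFC.sqrt_mul_sqrt_self _ (posSemidef_conjTranspose_mul_self _).nonneg
  have hRx (x : EuclideanSpace ℝ (Fin p)) : (1 / 2) * ‖x‖ ≤ ‖toEuclideanLin R x‖ := by
    rw [norm_toEuclideanLin_cfcSqrt_conjTranspose_mul_self]
    convert mul_norm_le_norm_toEuclideanLin_add hXh hE x using 1
    norm_num
  have hR1x (x : EuclideanSpace ℝ (Fin p)) : 1 * ‖x‖ ≤ ‖toEuclideanLin (R + 1) x‖ :=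
    (one_mul ‖x‖).symm ▸ (CFC.sqrt_nonneg _).posSemidef.norm_le_norm_toEuclideanLin_add_one x
  have hRu := isUnit_of_forall_mul_norm_le one_half_pos hRx
  refine ⟨?_, ?_⟩
  · rw [rank_eq_card_of_isUnit_conjTranspose_mul_self (hRR ▸ hRu.mul hRu), Fintype.card_fin]
  · rw [polarProj_eq_mul_inv_cfcSqrt]
    refine frobNorm_mul_inv_sub_polarExpansion_le hX hE ?_ hRu ?_
      (isUnit_of_forall_mul_norm_le one_pos hR1x) ?_
    · rwa [← conjTranspose_eq_transpose_of_trivial]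
    · exact (l2_opNorm_inv_le_of_forall_mul_norm_le one_half_pos hRx).trans_eq (by norm_num)
    · exact (l2_opNorm_inv_le_of_forall_mul_norm_le one_pos hR1x).trans_eq inv_one
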